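/- Let μ be a compactly supported Borel probability measure on ℝ and Γ ⊂ ℝ countable. The family {e_γ : γ ∈ Γ} is an orthonormal basis of L²(μ) if and only if the spectral function c_Γ(t) = ∑_{γ∈Γ} |μ̂(γ+t)|² is identically 1 on ℝ. -/

import Mathlib

/-!
Write `e_t(x) = exp(2πitx)`. In `L²(μ)` one has `⟪e_γ, e_{-t}⟫ = μ̂(-(γ + t))`, so `c_Γ(t)` is the
Bessel sum `∑_γ |⟪e_γ, e_{-t}⟫|²` of the unit vector `e_{-t}`. For an orthonormal basis this is `1`
by Parseval. Conversely, if `c_Γ ≡ 1`, the term `|⟪e_{γ₀}, e_{γ₀}⟫|² = 1` already exhausts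
`c_Γ(-γ₀)`, so `{e_γ}` is orthonormal, and equality in Bessel's inequality puts every `e_t` in the
closed span of the `e_γ`. As `μ` lives on a compact set, Stone–Weierstrass makes the span of all
the `e_t` dense in `L²(μ)`.
-/

open MeasureTheory Real ENNReal

open scoped InnerProductSpace BoundedContinuousFunction

section Hilbert

variable {𝕜 E ι : Type*} [RCLike 𝕜] [NormedAddCommGroup E] [InnerProductSpace 𝕜 E]

theorem HilbertBasis.tsum_norm_inner_sq (b : HilbertBasis ι 𝕜 E) (x : E) :
    ∑' i, ‖⟪b i, x⟫_𝕜‖ ^ 2 = ‖x‖ ^ 2 := by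
  have h := b.hasSum_inner_mul_inner x x
  simp only [← inner_conj_symm x (b _), RCLike.conj_mul, inner_self_eq_norm_sq_to_K] at h
  exact_mod_cast h.tsum_eq

theorem Orthonormal.norm_sub_sum_inner_smul_sq {v : ι → E} (hv : Orthonormal 𝕜 v)
    (s : Finset ι) (x : E) :
    ‖x - ∑ i ∈ s, ⟪v i, x⟫_𝕜 • v i‖ ^ 2 = ‖x‖ ^ 2 - ∑ i ∈ s, ‖⟪v i, x⟫_𝕜‖ ^ 2 := by
  have hp : ⟪x, ∑ i ∈ s, ⟪v i, x⟫_𝕜 • v i⟫_𝕜 = ((∑ i ∈ s, ‖⟪v i, x⟫_𝕜‖ ^ 2 : ℝ) : 𝕜) := by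
    simp only [inner_sum, inner_smul_right, ← inner_conj_symm x (v _), RCLike.mul_conj,
      RCLike.ofReal_sum, RCLike.ofReal_pow]
  have hpp : ‖∑ i ∈ s, ⟪v i, x⟫_𝕜 • v i‖ ^ 2 = ∑ i ∈ s, ‖⟪v i, x⟫_𝕜‖ ^ 2 := by
    have h := hv.inner_sum (fun i => ⟪v i, x⟫_𝕜) (fun i => ⟪v i, x⟫_𝕜) s
    simp only [inner_self_eq_norm_sq_to_K, RCLike.conj_mul] at h
    exact_mod_cast h
  rw [@norm_sub_sq 𝕜, hp, RCLike.ofReal_re, hpp]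
  ring

theorem Orthonormal.mem_topologicalClosure_span_of_tsum_norm_inner_sq_eq {v : ι → E}
    (hv : Orthonormal 𝕜 v) {x : E} (hx : ∑' i, ‖⟪v i, x⟫_𝕜‖ ^ 2 = ‖x‖ ^ 2) :
    x ∈ (Submodule.span 𝕜 (Set.range v)).topologicalClosure := by
  have hsum : HasSum (fun i => ‖⟪v i, x⟫_𝕜‖ ^ 2) (‖x‖ ^ 2) :=
    hx ▸ (hv.inner_products_summable x).hasSum
  refine Metric.mem_closure_iff.mpr fun ε hε => ?_
  obtain ⟨s, hs⟩ : ∃ s : Finset ι, ‖x‖ ^ 2 - ε ^ 2 < ∑ i ∈ s, ‖⟪v i, x⟫_𝕜‖ ^ 2 :=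
    (hsum.eventually (eventually_gt_nhds (by nlinarith))).exists
  refine ⟨∑ i ∈ s, ⟪v i, x⟫_𝕜 • v i,
    Submodule.sum_mem _ fun i _ => Submodule.smul_mem _ _ (Submodule.subset_span ⟨i, rfl⟩), ?_⟩
  rw [dist_eq_norm, ← sq_lt_sq₀ (norm_nonneg _) hε.le, hv.norm_sub_sum_inner_smul_sq]
  linarith

theorem orthonormal_of_tsum_norm_inner_sq_eq_one {v : ι → E} (hv : ∀ i, ‖v i‖ = 1)
    (h : ∀ j, ∑' i, ‖⟪v i, v j⟫_𝕜‖ ^ 2 = 1) : Orthonormal 𝕜 v := by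
  classical
  refine ⟨hv, fun i j hij => ?_⟩
  have hsum : Summable fun k => ‖⟪v k, v j⟫_𝕜‖ ^ 2 := by
    by_contra hns
    simpa [tsum_eq_zero_of_not_summable hns] using h j
  have hpair := hsum.sum_le_tsum {i, j} fun k _ => by positivity
  rw [Finset.sum_pair hij, h j, inner_self_eq_norm_sq_to_K, hv j] at hpair
  simpa using hpair

end Hilbert

noncomputable section

theorem ContinuousMap.exists_mem_starSubalgebra_near_of_isCompact {𝕜 X : Type*} [RCLike 𝕜]
    [TopologicalSpace X] {A : StarSubalgebra 𝕜 C(X, 𝕜)} (hA : A.SeparatesPoints)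
    (f : C(X, 𝕜)) {K : Set X} (hK : IsCompact K) {ε : ℝ} (hε : 0 < ε) :
    ∃ g ∈ A, ∀ x ∈ K, ‖g x - f x‖ < ε := by
  have : CompactSpace K := isCompact_iff_compactSpace.mp hK
  let restrict : C(X, 𝕜) →⋆ₐ[𝕜] C(K, 𝕜) := compStarAlgHom' 𝕜 𝕜 ⟨Subtype.val, by fun_prop⟩
  have hsep : (A.map restrict).SeparatesPoints := by
    intro x y hxy
    obtain ⟨_, ⟨g, hgA, rfl⟩, hg⟩ := hA (Subtype.coe_ne_coe.mpr hxy)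
    exact ⟨_, ⟨restrict g, ⟨g, hgA, rfl⟩, rfl⟩, hg⟩
  have hdense := starSubalgebra_topologicalClosure_eq_top_of_separatesPoints _ hsep
  obtain ⟨_, ⟨g, hgA, rfl⟩, hgf⟩ := Metric.mem_closure_iff.mp
    (hdense.symm ▸ StarSubalgebra.mem_top : restrict f ∈ (A.map restrict).topologicalClosure) ε hε
  refine ⟨g, hgA, fun x hx => ?_⟩
  rw [← dist_eq_norm, dist_comm]
  exact (dist_apply_le_dist (f := restrict f) (g := restrict g) ⟨x, hx⟩).trans_lt hgf

theorem norm_exp_two_pi_I_mul (t x : ℝ) : ‖Complex.exp (2 * π * Complex.I * t * x)‖ = 1 := by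
  rw [show 2 * π * Complex.I * t * x = ((2 * π * t * x : ℝ) : ℂ) * Complex.I by push_cast; ring]
  exact Complex.norm_exp_ofReal_mul_I _

def fourierExp (t : ℝ) : ℝ →ᵇ ℂ :=
  .ofNormedAddCommGroup (fun x => Complex.exp (2 * π * Complex.I * t * x)) (by fun_prop) 1
    fun x => (norm_exp_two_pi_I_mul t x).le

@[simp]
theorem fourierExp_apply (t x : ℝ) : fourierExp t x = Complex.exp (2 * π * Complex.I * t * x) :=
  rfl

theorem norm_fourierExp_apply (t x : ℝ) : ‖fourierExp t x‖ = 1 :=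
  norm_exp_two_pi_I_mul t x

theorem fourierExp_zero : fourierExp 0 = 1 := by
  ext x; simp

theorem fourierExp_add (s t : ℝ) : fourierExp (s + t) = fourierExp s * fourierExp t := by
  ext x
  simp only [fourierExp_apply, BoundedContinuousFunction.coe_mul, Pi.mul_apply, ← Complex.exp_add]
  push_cast; ring_nf

theorem star_fourierExp (t : ℝ) : star (fourierExp t) = fourierExp (-t) := by
  ext x
  simp only [BoundedContinuousFunction.star_apply, fourierExp_apply, Complex.star_def,
    ← Complex.exp_conj, map_mul, Complex.conj_ofReal, Complex.conj_I, map_ofNat]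
  push_cast; ring_nf

theorem fourierExp_apply_add (t x y : ℝ) :
    fourierExp t (x + y) = fourierExp t x * fourierExp t y := by
  simp only [fourierExp_apply, ← Complex.exp_add]
  push_cast; ring_nf

theorem fourierExp_apply_of_mul_eq_half {t x : ℝ} (h : t * x = 1 / 2) : fourierExp t x = -1 := by
  have h' : (t : ℂ) * x = 1 / 2 := by rw [← Complex.ofReal_mul, h]; push_cast; ring
  rw [fourierExp_apply, ← Complex.exp_pi_mul_I]
  congr 1
  linear_combination (2 * π * Complex.I) * h'

theorem exists_fourierExp_apply_ne {x y : ℝ} (hxy : x ≠ y) :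
    ∃ t, fourierExp t x ≠ fourierExp t y := by
  have hd : x - y ≠ 0 := sub_ne_zero.mpr hxy
  set t := 1 / (2 * (x - y)) with ht
  refine ⟨t, fun h => ?_⟩
  have hx : fourierExp t x = -fourierExp t y := by
    have hhalf : t * (x - y) = 1 / 2 := by rw [ht]; field_simp
    rw [← add_sub_cancel y x, fourierExp_apply_add, fourierExp_apply_of_mul_eq_half hhalf]
    ring
  have hy : fourierExp t y = 0 := by linear_combination (hx - h) / 2
  simpa [hy] using norm_fourierExp_apply t y

theorem adjoin_range_fourierExp_eq_span :
    Subalgebra.toSubmodule (StarAlgebra.adjoin ℂ (Set.range fourierExp)).toSubalgebra =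
      Submodule.span ℂ (Set.range fourierExp) := by
  let M : Submonoid (ℝ →ᵇ ℂ) :=
    { carrier := Set.range fourierExp
      mul_mem' := by rintro _ _ ⟨s, rfl⟩ ⟨t, rfl⟩; exact ⟨s + t, fourierExp_add s t⟩
      one_mem' := ⟨0, fourierExp_zero⟩ }
  have hstar : star (Set.range fourierExp) ⊆ Set.range fourierExp := by
    rintro _ ⟨t, ht⟩
    exact ⟨-t, by rw [← star_fourierExp, ht, star_star]⟩
  rw [StarAlgebra.adjoin_toSubalgebra, Set.union_eq_left.mpr hstar]
  exact Algebra.adjoin_eq_span_of_subset _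
    fun f hf => Submodule.subset_span ((Submonoid.closure_le (S := M)).mpr subset_rfl hf)

theorem exists_mem_span_fourierExp_near {K : Set ℝ} (hK : IsCompact K)
    (f : ℝ →ᵇ ℂ) {ε : ℝ} (hε : 0 < ε) :
    ∃ g ∈ Submodule.span ℂ (Set.range fourierExp), ∀ x ∈ K, ‖g x - f x‖ < ε := by
  let A := (StarAlgebra.adjoin ℂ (Set.range fourierExp)).map
    (BoundedContinuousFunction.toContinuousMapStarₐ ℂ)
  have hsep : A.SeparatesPoints := by
    intro x y hxy
    obtain ⟨t, ht⟩ := exists_fourierExp_apply_ne hxy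
    exact ⟨_, ⟨_, ⟨fourierExp t, StarAlgebra.subset_adjoin ℂ _ ⟨t, rfl⟩, rfl⟩, rfl⟩, ht⟩
  obtain ⟨_, ⟨g, hg, rfl⟩, hgf⟩ := ContinuousMap.exists_mem_starSubalgebra_near_of_isCompact
    hsep f.toContinuousMap hK hε
  have hg' : g ∈ Subalgebra.toSubmodule
      (StarAlgebra.adjoin ℂ (Set.range fourierExp)).toSubalgebra := hg
  rw [adjoin_range_fourierExp_eq_span] at hg'
  exact ⟨g, hg', hgf⟩

theorem BoundedContinuousFunction.norm_toLp_le_of_forall_mem_le {α E 𝕜 : Type*}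
    [TopologicalSpace α] [MeasurableSpace α] [BorelSpace α] [NormedAddCommGroup E]
    [SecondCountableTopologyEither α E] {p : ℝ≥0∞} [Fact (1 ≤ p)] [NormedRing 𝕜] [Module 𝕜 E]
    [IsBoundedSMul 𝕜 E] {μ : Measure α} [IsProbabilityMeasure μ] {K : Set α} (hK : μ Kᶜ = 0)
    (f : α →ᵇ E) {C : ℝ} (hC : 0 ≤ C) (hf : ∀ x ∈ K, ‖f x‖ ≤ C) :
    ‖toLp p μ 𝕜 f‖ ≤ C := by
  have hbound : ∀ᵐ x ∂μ, ‖toLp p μ 𝕜 f x‖ ≤ C := by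
    filter_upwards [coeFn_toLp p μ 𝕜 f, measure_eq_zero_iff_ae_notMem.mp hK] with x hx hxK
    rw [hx]
    exact hf x (not_not.mp hxK)
  simpa [measureUnivNNReal] using Lp.norm_le_of_ae_bound hC hbound

section L2

variable (μ : Measure ℝ)

def fourierExpLp [IsFiniteMeasure μ] (t : ℝ) : Lp ℂ 2 μ :=
  BoundedContinuousFunction.toLp 2 μ ℂ (fourierExp t)

variable {μ}

theorem coeFn_fourierExpLp [IsFiniteMeasure μ] (t : ℝ) : fourierExpLp μ t =ᵐ[μ] fourierExp t :=
  BoundedContinuousFunction.coeFn_toLp 2 μ ℂ _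

theorem inner_fourierExpLp [IsFiniteMeasure μ] (s t : ℝ) :
    ⟪fourierExpLp μ s, fourierExpLp μ t⟫_ℂ = ∫ x, fourierExp (t - s) x ∂μ := by
  rw [L2.inner_def]
  refine integral_congr_ae ?_
  filter_upwards [coeFn_fourierExpLp s, coeFn_fourierExpLp t] with x hs ht
  rw [hs, ht, RCLike.inner_apply, mul_comm, sub_eq_neg_add, fourierExp_add, ← star_fourierExp]
  rfl

theorem norm_fourierExpLp [IsProbabilityMeasure μ] (t : ℝ) : ‖fourierExpLp μ t‖ = 1 := by
  refine (pow_eq_one_iff_of_nonneg (norm_nonneg _) two_ne_zero).mp ?_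
  rw [@norm_sq_eq_re_inner ℂ, inner_fourierExpLp, sub_self, fourierExp_zero]
  simp

theorem norm_integral_fourierExp_neg (t : ℝ) :
    ‖∫ x, fourierExp (-t) x ∂μ‖ = ‖∫ x, fourierExp t x ∂μ‖ := by
  simp_rw [← star_fourierExp, BoundedContinuousFunction.star_apply, Complex.star_def, integral_conj,
    Complex.norm_conj]

theorem topologicalClosure_span_fourierExpLp [IsProbabilityMeasure μ] {K : Set ℝ}
    (hK : IsCompact K) (hμK : μ Kᶜ = 0) :
    (Submodule.span ℂ (Set.range (fourierExpLp μ))).topologicalClosure = ⊤ := by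
  refine eq_top_iff.mpr fun f _ => ?_
  refine (BoundedContinuousFunction.toLp_denseRange ℂ (μ := μ) (p := 2) (E := ℂ)
    (by norm_num)).induction_on f (Submodule.isClosed_topologicalClosure _) fun b => ?_
  refine Metric.mem_closure_iff.mpr fun ε hε => ?_
  obtain ⟨g, hg, hgb⟩ := exists_mem_span_fourierExp_near hK b (half_pos hε)
  refine ⟨BoundedContinuousFunction.toLp 2 μ ℂ g, ?_, ?_⟩
  · rw [show Set.range (fourierExpLp μ) = _ '' _ from Set.range_comp _ fourierExp]
    exact Submodule.apply_mem_span_image_of_mem_span _ hg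
  · rw [dist_eq_norm, ← map_sub]
    refine (BoundedContinuousFunction.norm_toLp_le_of_forall_mem_le hμK _ (half_pos hε).le
      fun x hx => ?_).trans_lt (half_lt_self hε)
    rw [BoundedContinuousFunction.coe_sub, Pi.sub_apply, norm_sub_rev]
    exact (hgb x hx).le

end L2

end

theorem stmt5 (μ : Measure ℝ) [IsProbabilityMeasure μ]
    (hK : ∃ K : Set ℝ, IsCompact K ∧ μ Kᶜ = 0)
    (S : Set ℝ)
    (e : S → Lp ℂ 2 μ)
    (he : ∀ γ : S, (e γ : ℝ → ℂ) =ᵐ[μ] fun x => Complex.exp (2 * π * Complex.I * (γ : ℝ) * x)) :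
    (Orthonormal ℂ e ∧ (Submodule.span ℂ (Set.range e)).topologicalClosure = ⊤) ↔
      ∀ t : ℝ, ∑' γ : S, ‖∫ x, Complex.exp (2 * π * Complex.I * ((γ : ℝ) + t) * x) ∂μ‖ ^ 2 = 1 := by
  obtain rfl : e = fun γ : S => fourierExpLp μ γ :=
    funext fun γ => Lp.ext ((he γ).trans (coeFn_fourierExpLp (γ : ℝ)).symm)
  have hc (γ : S) (t : ℝ) : ‖∫ x, Complex.exp (2 * π * Complex.I * ((γ : ℝ) + t) * x) ∂μ‖ =
      ‖⟪fourierExpLp μ γ, fourierExpLp μ (-t)⟫_ℂ‖ := by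
    rw [inner_fourierExpLp, show -t - γ = -(γ + t) by ring, norm_integral_fourierExp_neg]
    simp
  simp_rw [hc]
  constructor
  · rintro ⟨horth, hdense⟩ t
    have := (HilbertBasis.mk horth hdense.ge).tsum_norm_inner_sq (fourierExpLp μ (-t))
    rwa [HilbertBasis.coe_mk, norm_fourierExpLp, one_pow] at this
  · intro h
    have horth : Orthonormal ℂ fun γ : S => fourierExpLp μ γ :=
      orthonormal_of_tsum_norm_inner_sq_eq_one (fun γ => norm_fourierExpLp γ)
        fun γ => by simpa using h (-γ)
    refine ⟨horth, eq_top_iff.mpr ?_⟩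
    obtain ⟨K, hK, hμK⟩ := hK
    rw [← topologicalClosure_span_fourierExpLp hK hμK]
    refine Submodule.topologicalClosure_minimal _ (Submodule.span_le.mpr ?_)
      (Submodule.isClosed_topologicalClosure _)
    rintro _ ⟨t, rfl⟩
    refine horth.mem_topologicalClosure_span_of_tsum_norm_inner_sq_eq ?_
    rw [norm_fourierExpLp, one_pow, ← h (-t), neg_neg]
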